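/- Let C_{HL,c}(α) = sup over measurable sets E ⊆ ℝⁿ with 0 < |E| < ∞ of (1/|E|)·|{x ∈ ℝⁿ : M_{HL,c} χ_E(x) > α}|. There exist a constant c_n > 0 depending only on n and a threshold α₀ ∈ (0,1) such that for all α ∈ (α₀, 1), C_{HL,c}(α) − 1 ≥ c_n · (1/α − 1)^{1/n}. -/

import Mathlib

open MeasureTheory Set Filter
open scoped ENNReal

/-- `Q` is an open cube in `ℝⁿ` (not necessarily axis-parallel): the image
of the open unit cube under a rotation/reflection, a dilation and a
translation. -/
def IsCube {n : ℕ} (Q : Set (EuclideanSpace ℝ (Fin n))) : Prop :=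
  ∃ (a : EuclideanSpace ℝ (Fin n)) (r : ℝ)
    (O : EuclideanSpace ℝ (Fin n) ≃ₗᵢ[ℝ] EuclideanSpace ℝ (Fin n)), 0 < r ∧
      Q = (fun y => a + r • O y) ''
        {y : EuclideanSpace ℝ (Fin n) | ∀ i, y i ∈ Set.Ioo (0 : ℝ) 1}

/-- The uncentered Hardy–Littlewood maximal operator with respect to open
(not necessarily axis-parallel) cubes on `ℝⁿ`. -/
noncomputable def MHLc (n : ℕ) (f : EuclideanSpace ℝ (Fin n) → ℝ≥0∞)
    (x : EuclideanSpace ℝ (Fin n)) : ℝ≥0∞ :=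
  ⨆ (Q : Set (EuclideanSpace ℝ (Fin n))) (_ : IsCube Q) (_ : x ∈ Q),
    (∫⁻ y in Q, f y) / volume Q

/-- The sharp Tauberian constant `C_{HL,c}(α)` of the uncentered
Hardy–Littlewood maximal operator with respect to cubes. -/
noncomputable def CHLc (n : ℕ) (α : ℝ) : ℝ≥0∞ :=
  ⨆ (E : Set (EuclideanSpace ℝ (Fin n))) (_ : MeasurableSet E)
    (_ : 0 < volume E) (_ : volume E < ⊤),
    volume {x : EuclideanSpace ℝ (Fin n) |
      MHLc n (E.indicator 1) x > ENNReal.ofReal α} / volume E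

/-!
Take `E` the unit cube. A cube of side `r` turned so that its long diagonal is vertical, with its
top vertex at height `h` above the top face of `E`, sticks out of `E` only by a corner of volume at
most `(h √n)ⁿ`, a fraction `(h √n / r)ⁿ` of the cube. So `M χ_E > α` on a slab of height
`≈ r (1 - α)^(1/n) / √n` on top of `E`, whose volume is `≈ (1 - α)^(1/n)`; finally
`1 / α - 1 ≤ 2 (1 - α)` for `α ≥ 1 / 2`.
-/

open scoped Pointwise RealInnerProductSpace

section Euclidean

variable {ι : Type*}

lemma setOf_forall_mem_eq_preimage_pi (S : ι → Set ℝ) :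
    {y : EuclideanSpace ℝ ι | ∀ i, y i ∈ S i} = WithLp.ofLp ⁻¹' univ.pi S := by
  ext; simp

variable (ι) in
def onesVec : EuclideanSpace ℝ ι := WithLp.toLp 2 1

@[simp] lemma onesVec_apply (i : ι) : onesVec ι i = 1 := rfl

variable (ι) in
def unitCube : Set (EuclideanSpace ℝ ι) := {y | ∀ i, y i ∈ Ioo 0 1}

variable [Fintype ι]

lemma measurableSet_setOf_forall_mem {S : ι → Set ℝ} (hS : ∀ i, MeasurableSet (S i)) :
    MeasurableSet {y : EuclideanSpace ℝ ι | ∀ i, y i ∈ S i} := by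
  rw [setOf_forall_mem_eq_preimage_pi]
  exact (MeasurableSet.univ_pi hS).preimage (PiLp.volume_preserving_ofLp ι).measurable

lemma volume_setOf_forall_mem {S : ι → Set ℝ} (hS : ∀ i, MeasurableSet (S i)) :
    volume {y : EuclideanSpace ℝ ι | ∀ i, y i ∈ S i} = ∏ i, volume (S i) := by
  rw [setOf_forall_mem_eq_preimage_pi, (PiLp.volume_preserving_ofLp ι).measure_preimage
    (MeasurableSet.univ_pi hS).nullMeasurableSet, volume_pi_pi]

lemma norm_onesVec : ‖onesVec ι‖ = √(Fintype.card ι) := by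
  simp [EuclideanSpace.norm_eq]

lemma measurableSet_unitCube : MeasurableSet (unitCube ι) :=
  measurableSet_setOf_forall_mem fun _ => measurableSet_Ioo

lemma volume_unitCube : volume (unitCube ι) = 1 := by
  rw [unitCube, volume_setOf_forall_mem fun _ => measurableSet_Ioo]
  simp

lemma norm_sub_onesVec_lt_of_mem_unitCube [Nonempty ι] {y : EuclideanSpace ℝ ι}
    (hy : y ∈ unitCube ι) : ‖y - onesVec ι‖ < √(Fintype.card ι) := by
  rw [EuclideanSpace.norm_eq]
  refine Real.sqrt_lt_sqrt (by positivity) ?_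
  calc ∑ j, ‖(y - onesVec ι) j‖ ^ 2 < ∑ _j : ι, (1 : ℝ) := by
        refine Finset.sum_lt_sum_of_nonempty Finset.univ_nonempty fun j _ => ?_
        have := hy j
        simp only [PiLp.sub_apply, onesVec_apply, Real.norm_eq_abs, sq_abs]
        nlinarith [this.1, this.2]
    _ = Fintype.card ι := by simp

end Euclidean

section Isometry

variable {E : Type*} [NormedAddCommGroup E] [InnerProductSpace ℝ E]

lemma exists_linearIsometryEquiv_apply_eq {u w : E} (h : ‖u‖ = ‖w‖) :
    ∃ O : E ≃ₗᵢ[ℝ] E, O u = w :=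
  ⟨_, Submodule.reflection_sub h⟩

variable [FiniteDimensional ℝ E] [MeasurableSpace E] [BorelSpace E]

lemma volume_image_add_smul_linearIsometryEquiv (a : E) {r : ℝ} (hr : 0 ≤ r) (O : E ≃ₗᵢ[ℝ] E)
    {S : Set E} (hS : MeasurableSet S) :
    volume ((fun y => a + r • O y) '' S) = ENNReal.ofReal (r ^ Module.finrank ℝ E) * volume S := by
  have h : (fun y => a + r • O y) '' S = a +ᵥ r • O.symm ⁻¹' S := by
    rw [← O.image_eq_preimage_symm, ← image_smul, ← image_vadd, image_image, image_image]
    rfl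
  rw [h, measure_vadd, Measure.addHaar_smul_of_nonneg _ hr,
    O.symm.measurePreserving.measure_preimage hS.nullMeasurableSet]

end Isometry

section VertexCube

variable {ι : Type*} [Fintype ι] (O : EuclideanSpace ℝ ι ≃ₗᵢ[ℝ] EuclideanSpace ℝ ι)

/-- The cube of side `r` with vertex `v`, turned by `O`. If `O (onesVec ι) = √(card ι) • u`, its
long diagonal points in the direction `u` and `v` is its highest point in that direction. -/
def vertexCube (r : ℝ) (v : EuclideanSpace ℝ ι) : Set (EuclideanSpace ℝ ι) :=
  (fun y => v + r • O (y - onesVec ι)) '' unitCube ι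

variable (v : EuclideanSpace ℝ ι)

lemma add_smul_map_sub_onesVec_eq (r : ℝ) :
    (fun y => v + r • O (y - onesVec ι)) = fun y => (v - r • O (onesVec ι)) + r • O y := by
  ext1 y
  rw [map_sub, smul_sub]
  abel

lemma volume_image_add_smul_map_sub_onesVec {r : ℝ} (hr : 0 ≤ r) {S : Set (EuclideanSpace ℝ ι)}
    (hS : MeasurableSet S) :
    volume ((fun y => v + r • O (y - onesVec ι)) '' S) =
      ENNReal.ofReal (r ^ Fintype.card ι) * volume S := by
  rw [add_smul_map_sub_onesVec_eq O v r, volume_image_add_smul_linearIsometryEquiv _ hr _ hS,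
    finrank_euclideanSpace]

lemma volume_vertexCube {r : ℝ} (hr : 0 ≤ r) :
    volume (vertexCube O r v) = ENNReal.ofReal (r ^ Fintype.card ι) := by
  rw [vertexCube, volume_image_add_smul_map_sub_onesVec O v hr measurableSet_unitCube,
    volume_unitCube, mul_one]

lemma vertexCube_subset_ball [Nonempty ι] {r : ℝ} (hr : 0 < r) :
    vertexCube O r v ⊆ Metric.ball v (r * √(Fintype.card ι)) := by
  rintro _ ⟨y, hy, rfl⟩
  rw [Metric.mem_ball, dist_eq_norm, add_sub_cancel_left, norm_smul, O.norm_map,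
    Real.norm_of_nonneg hr.le]
  exact mul_lt_mul_of_pos_left (norm_sub_onesVec_lt_of_mem_unitCube hy) hr

variable {O} {u : EuclideanSpace ℝ ι}

lemma sqrt_card_mul_inner_map_eq_sum (hO : O (onesVec ι) = √(Fintype.card ι) • u)
    (w : EuclideanSpace ℝ ι) : √(Fintype.card ι) * ⟪O w, u⟫ = ∑ j, w j := by
  rw [← inner_smul_right, ← hO, O.inner_map_map, PiLp.inner_apply]
  simp

lemma sub_smul_mem_vertexCube (r : ℝ) (hO : O (onesVec ι) = √(Fintype.card ι) • u) {s : ℝ}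
    (hs : 0 < s) (hsr : s < r * √(Fintype.card ι)) : v - s • u ∈ vertexCube O r v := by
  have hc : 0 < r * √(Fintype.card ι) := hs.trans hsr
  have hr : r ≠ 0 := left_ne_zero_of_mul hc.ne'
  have hn : √(Fintype.card ι) ≠ 0 := right_ne_zero_of_mul hc.ne'
  set θ := s / (r * √(Fintype.card ι))
  refine ⟨(1 - θ) • onesVec ι, fun i => ?_, ?_⟩
  · have : θ < 1 := (div_lt_one hc).2 hsr
    have : 0 < θ := div_pos hs hc
    simp only [PiLp.smul_apply, onesVec_apply, smul_eq_mul, mul_one, mem_Ioo]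
    constructor <;> linarith
  · have hθ : r * -θ * √(Fintype.card ι) = -s := by
      simp only [θ]; field_simp
    simp only
    rw [show (1 - θ) • onesVec ι - onesVec ι = -θ • onesVec ι by module, map_smul, hO,
      smul_smul, smul_smul, hθ]
    module

lemma volume_vertexCube_cap_le (hO : O (onesVec ι) = √(Fintype.card ι) • u) {r : ℝ}
    (hr : 0 < r) {h : ℝ} (hh : 0 ≤ h) :
    volume {z ∈ vertexCube O r v | -h ≤ ⟪z - v, u⟫} ≤
      ENNReal.ofReal ((h * √(Fintype.card ι)) ^ Fintype.card ι) := by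
  set c := h * √(Fintype.card ι) / r
  have hsub : {z ∈ vertexCube O r v | -h ≤ ⟪z - v, u⟫} ⊆
      (fun y => v + r • O (y - onesVec ι)) '' {y | ∀ i, y i ∈ Icc (1 - c) 1} := by
    rintro _ ⟨⟨y, hy, rfl⟩, hcap⟩
    refine ⟨y, fun i => ⟨?_, (hy i).2.le⟩, rfl⟩
    have hsum : ∑ j, (1 - y j) ≤ c := by
      rw [le_div_iff₀ hr]
      have := sqrt_card_mul_inner_map_eq_sum hO (y - onesVec ι)
      rw [add_sub_cancel_left, inner_smul_left] at hcap
      simp only [PiLp.sub_apply, onesVec_apply, Finset.sum_sub_distrib] at this ⊢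
      simp only [conj_trivial] at hcap
      nlinarith [Real.sqrt_nonneg (Fintype.card ι)]
    have := (Finset.single_le_sum (fun j _ => (sub_pos.2 (hy j).2).le) (Finset.mem_univ i)).trans
      hsum
    linarith
  refine (measure_mono hsub).trans_eq ?_
  rw [volume_image_add_smul_map_sub_onesVec O v hr.le
    (measurableSet_setOf_forall_mem fun _ => measurableSet_Icc),
    volume_setOf_forall_mem fun _ => measurableSet_Icc]
  simp only [Real.volume_Icc, sub_sub_cancel, Finset.prod_const, Finset.card_univ]
  rw [← ENNReal.ofReal_pow (by positivity), ← ENNReal.ofReal_mul (by positivity), ← mul_pow]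
  congr 2
  exact mul_div_cancel₀ _ hr.ne'

end VertexCube

section MaximalFunction

variable {n : ℕ}

lemma isCube_unitCube : IsCube (unitCube (Fin n)) :=
  ⟨0, 1, LinearIsometryEquiv.refl ℝ _, one_pos, by ext; simp [unitCube]⟩

lemma isCube_vertexCube (O : EuclideanSpace ℝ (Fin n) ≃ₗᵢ[ℝ] EuclideanSpace ℝ (Fin n)) {r : ℝ}
    (hr : 0 < r) (v : EuclideanSpace ℝ (Fin n)) : IsCube (vertexCube O r v) :=
  ⟨_, r, O, hr, by rw [vertexCube, add_smul_map_sub_onesVec_eq]; rfl⟩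

lemma IsCube.volume_ne_top {Q : Set (EuclideanSpace ℝ (Fin n))} (hQ : IsCube Q) :
    volume Q ≠ ⊤ := by
  obtain ⟨a, r, O, hr, rfl⟩ := hQ
  have hvol := volume_image_add_smul_linearIsometryEquiv a hr.le O
    (measurableSet_unitCube (ι := Fin n))
  rw [volume_unitCube, mul_one] at hvol
  exact hvol.trans_ne ENNReal.ofReal_ne_top

lemma ofReal_lt_MHLc_indicator {E Q : Set (EuclideanSpace ℝ (Fin n))} (hE : MeasurableSet E)
    (hQ : IsCube Q) {x : EuclideanSpace ℝ (Fin n)} (hx : x ∈ Q) {α : ℝ}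
    (h : ENNReal.ofReal α * volume Q < volume (E ∩ Q)) :
    ENNReal.ofReal α < MHLc n (E.indicator 1) x := by
  have hav : ENNReal.ofReal α < (∫⁻ y in Q, E.indicator 1 y) / volume Q := by
    rwa [lintegral_indicator_one hE, Measure.restrict_apply hE,
      ENNReal.lt_div_iff_mul_lt (Or.inr ENNReal.ofReal_ne_top) (Or.inl hQ.volume_ne_top)]
  exact hav.trans_le (le_iSup₂_of_le Q hQ (le_iSup_of_le hx le_rfl))

lemma div_le_CHLc {E : Set (EuclideanSpace ℝ (Fin n))} (hE : MeasurableSet E)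
    (h0 : 0 < volume E) (htop : volume E < ⊤) (α : ℝ) :
    volume {x | MHLc n (E.indicator 1) x > ENNReal.ofReal α} / volume E ≤ CHLc n α :=
  le_iSup₂_of_le E hE (le_iSup₂_of_le h0 htop le_rfl)

end MaximalFunction

section Slab

variable {ι : Type*} [DecidableEq ι]

/-- The slab of height `t` on top of the middle half of the face `{y i₀ = 1}` of the unit cube.
Cubes of diameter `1 / 2` through its points stay inside `(0, 1)` in the coordinates `j ≠ i₀`. -/
def topSlab (i₀ : ι) (t : ℝ) : Set (EuclideanSpace ℝ ι) :=
  {x | ∀ j, x j ∈ Function.update (fun _ => Ioo (1 / 4 : ℝ) (3 / 4)) i₀ (Ioo 1 (1 + t)) j}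

lemma disjoint_unitCube_topSlab (i₀ : ι) (t : ℝ) : Disjoint (unitCube ι) (topSlab i₀ t) :=
  disjoint_left.2 fun x hxU hxF => by
    have := hxF i₀
    simp only [Function.update_self] at this
    linarith [(hxU i₀).2, this.1]

variable [Fintype ι]

lemma volume_topSlab (i₀ : ι) (t : ℝ) :
    volume (topSlab i₀ t) = ENNReal.ofReal t * ENNReal.ofReal (1 / 2) ^ (Fintype.card ι - 1) := by
  have hS j : MeasurableSet
      (Function.update (fun _ => Ioo (1 / 4 : ℝ) (3 / 4)) i₀ (Ioo 1 (1 + t)) j) := by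
    rw [Function.update_apply]; split_ifs <;> exact measurableSet_Ioo
  rw [topSlab, volume_setOf_forall_mem hS,
    Finset.prod_congr rfl fun j _ => Function.apply_update (fun _ s => volume s) _ i₀ _ j,
    Finset.prod_update_of_mem (Finset.mem_univ _)]
  norm_num [Real.volume_Ioo, Finset.card_sdiff]

lemma measurableSet_topSlab (i₀ : ι) (t : ℝ) : MeasurableSet (topSlab i₀ t) :=
  measurableSet_setOf_forall_mem fun j => by
    rw [Function.update_apply]; split_ifs <;> exact measurableSet_Ioo

lemma vertexCube_diff_unitCube_subset (O : EuclideanSpace ℝ ι ≃ₗᵢ[ℝ] EuclideanSpace ℝ ι)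
    {i₀ : ι} {t : ℝ} {x : EuclideanSpace ℝ ι} (hx : x ∈ topSlab i₀ t) :
    let v := x + t • EuclideanSpace.single i₀ 1
    vertexCube O (4 * √(Fintype.card ι))⁻¹ v \ unitCube ι ⊆
      {z ∈ vertexCube O (4 * √(Fintype.card ι))⁻¹ v |
        -(2 * t) ≤ ⟪z - v, EuclideanSpace.single i₀ 1⟫} := by
  intro v z ⟨hzQ, hzU⟩
  have : Nonempty ι := ⟨i₀⟩
  have hcard : (0 : ℝ) < √(Fintype.card ι) := by simp [Fintype.card_pos]
  have hclose j : |z j - v j| < 1 / 4 := by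
    have := vertexCube_subset_ball O v (by positivity) hzQ
    rw [Metric.mem_ball, dist_eq_norm, inv_mul_eq_div, div_mul_cancel_right₀ hcard.ne'] at this
    exact (PiLp.norm_apply_le (z - v) j).trans_lt (by simpa using this)
  have hv₀ : v i₀ = x i₀ + t := by simp [v]
  have hv {j} (hj : j ≠ i₀) : v j = x j := by simp [v, hj]
  have hx₀ : x i₀ ∈ Ioo 1 (1 + t) := by simpa using hx i₀
  have hz₀ : 1 ≤ z i₀ := by
    by_contra! hlt
    refine hzU fun j => ?_
    have := abs_lt.1 (hclose j)
    rcases eq_or_ne j i₀ with rfl | hj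
    · rw [hv₀] at this
      constructor <;> linarith [hx₀.1, hx₀.2]
    · have hxj : x j ∈ Ioo (1 / 4) (3 / 4) := by simpa [hj] using hx j
      rw [hv hj] at this
      constructor <;> linarith [hxj.1, hxj.2]
  refine ⟨hzQ, ?_⟩
  simp only [EuclideanSpace.inner_single_right, PiLp.sub_apply, one_mul, conj_trivial]
  linarith [hx₀.2, hv₀]

end Slab

section Tauberian

variable {n : ℕ}

lemma ofReal_mul_volume_lt_volume_inter {X : Type*} [MeasurableSpace X] {μ : Measure X}
    {E Q : Set X} {α q d : ℝ} (hα : 0 ≤ α) (hq : 0 ≤ q) (hd : 0 ≤ d) (hQ : μ Q = ENNReal.ofReal q)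
    (hdiff : μ (Q \ E) ≤ ENNReal.ofReal d) (h : α * q < q - d) :
    ENNReal.ofReal α * μ Q < μ (E ∩ Q) := by
  have hsplit : μ Q ≤ μ (E ∩ Q) + μ (Q \ E) := by
    rw [inter_comm]; exact measure_le_inter_add_sdiff _ _ _
  calc ENNReal.ofReal α * μ Q = ENNReal.ofReal (α * q) := by
        rw [hQ, ENNReal.ofReal_mul hα]
    _ < ENNReal.ofReal (q - d) :=
        ENNReal.ofReal_lt_ofReal_iff'.2 ⟨h, (mul_nonneg hα hq).trans_lt h⟩
    _ = μ Q - ENNReal.ofReal d := by rw [hQ, ENNReal.ofReal_sub _ hd]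
    _ ≤ μ Q - μ (Q \ E) := tsub_le_tsub_left hdiff _
    _ ≤ μ (E ∩ Q) := tsub_le_iff_right.2 hsplit

lemma ofReal_lt_MHLc_indicator_unitCube_of_mem_topSlab (i₀ : Fin n) {α t : ℝ} (hα : 0 ≤ α)
    (ht : t < 1 / 4) (hsmall : (8 * n * t) ^ n < 1 - α) {x : EuclideanSpace ℝ (Fin n)}
    (hx : x ∈ topSlab i₀ t) : ENNReal.ofReal α < MHLc n ((unitCube (Fin n)).indicator 1) x := by
  have hn : (0 : ℝ) < √n := Real.sqrt_pos.2 (by exact_mod_cast i₀.pos)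
  have ht0 : 0 < t := by have := hx i₀; simp only [Function.update_self, mem_Ioo] at this; linarith
  obtain ⟨O, hO⟩ := exists_linearIsometryEquiv_apply_eq (u := onesVec (Fin n))
    (w := √(Fintype.card (Fin n)) • EuclideanSpace.single i₀ 1)
    (by simp [norm_onesVec, norm_smul, abs_of_pos hn])
  set r : ℝ := (4 * √(Fintype.card (Fin n)))⁻¹
  have hr : 0 < r := by simp only [r, Fintype.card_fin]; positivity
  set v := x + t • EuclideanSpace.single i₀ 1
  have hxQ : x ∈ vertexCube O r v := by
    have hrn : r * √(Fintype.card (Fin n)) = 1 / 4 := by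
      simp only [r, Fintype.card_fin]; field_simp
    simpa [v] using sub_smul_mem_vertexCube v r hO ht0 (hrn ▸ ht)
  have hdiff : volume (vertexCube O r v \ unitCube (Fin n)) ≤
      ENNReal.ofReal ((2 * t * √n) ^ n) := by
    have := volume_vertexCube_cap_le v hO hr (h := 2 * t) (by positivity)
    simp only [Fintype.card_fin] at this
    exact (measure_mono (vertexCube_diff_unitCube_subset O hx)).trans this
  have hcorner : (2 * t * √n) ^ n = r ^ n * (8 * n * t) ^ n := by
    rw [← mul_pow]
    congr 1
    simp only [r, Fintype.card_fin]
    field_simp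
    rw [Real.sq_sqrt (Nat.cast_nonneg n)]
    ring
  refine ofReal_lt_MHLc_indicator measurableSet_unitCube (isCube_vertexCube O hr v) hxQ
    (ofReal_mul_volume_lt_volume_inter (q := r ^ n) hα (by positivity) (by positivity)
      (by simpa using volume_vertexCube O v hr.le) hdiff ?_)
  rw [hcorner]
  nlinarith [mul_lt_mul_of_pos_left hsmall (pow_pos hr n)]

lemma one_add_volume_topSlab_le_CHLc (i₀ : Fin n) {α t : ℝ} (hα : 0 ≤ α) (hα1 : α < 1)
    (ht : t < 1 / 4) (hsmall : (8 * n * t) ^ n < 1 - α) :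
    1 + volume (topSlab i₀ t) ≤ CHLc n α := by
  have hsub : unitCube (Fin n) ∪ topSlab i₀ t ⊆
      {x | MHLc n ((unitCube (Fin n)).indicator 1) x > ENNReal.ofReal α} := by
    rintro x (hx | hx)
    · refine ofReal_lt_MHLc_indicator measurableSet_unitCube isCube_unitCube hx ?_
      simpa [volume_unitCube] using hα1
    · exact ofReal_lt_MHLc_indicator_unitCube_of_mem_topSlab i₀ hα ht hsmall hx
  calc 1 + volume (topSlab i₀ t) = volume (unitCube (Fin n) ∪ topSlab i₀ t) := by
        rw [measure_union (disjoint_unitCube_topSlab i₀ t) (measurableSet_topSlab i₀ t),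
          volume_unitCube]
    _ ≤ _ := measure_mono hsub
    _ = _ := by rw [volume_unitCube, div_one]
    _ ≤ CHLc n α := div_le_CHLc measurableSet_unitCube (by simp [volume_unitCube])
        (by simp [volume_unitCube]) α

lemma ofReal_rpow_one_sub_le_CHLc_sub_one (hn : 1 ≤ n) {α : ℝ} (hα : 0 ≤ α) (hα1 : α < 1) :
    ENNReal.ofReal ((1 - α) ^ (n⁻¹ : ℝ) / (16 * n) * (1 / 2) ^ (n - 1)) ≤ CHLc n α - 1 := by
  have hnR : (1 : ℝ) ≤ n := by exact_mod_cast hn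
  have hβ : 0 < 1 - α := by linarith
  set t := (1 - α) ^ (n⁻¹ : ℝ) / (16 * n)
  have ht : t < 1 / 4 := by
    rw [div_lt_iff₀ (by positivity)]
    nlinarith [Real.rpow_le_one hβ.le (by linarith) (by positivity : (0 : ℝ) ≤ (n : ℝ)⁻¹)]
  have hsmall : (8 * n * t) ^ n < 1 - α := by
    have h8 : 8 * n * t = (1 - α) ^ (n⁻¹ : ℝ) * (1 / 2) := by
      simp only [t]; field_simp; ring
    rw [h8, mul_pow, Real.rpow_inv_natCast_pow hβ.le (by omega)]
    have : (1 / 2 : ℝ) ^ n < 1 := pow_lt_one₀ (by norm_num) (by norm_num) (by omega)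
    nlinarith
  calc ENNReal.ofReal (t * (1 / 2) ^ (n - 1)) = volume (topSlab (⟨0, hn⟩ : Fin n) t) := by
        rw [volume_topSlab, Fintype.card_fin, ENNReal.ofReal_mul (by positivity),
          ENNReal.ofReal_pow (by norm_num)]
    _ ≤ CHLc n α - 1 := ENNReal.le_sub_of_add_le_left ENNReal.one_ne_top
        (one_add_volume_topSlab_le_CHLc _ hα hα1 ht hsmall)

end Tauberian

lemma one_div_sub_one_rpow_le {α p : ℝ} (hα : 1 / 2 ≤ α) (hα1 : α ≤ 1) (hp0 : 0 ≤ p)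
    (hp1 : p ≤ 1) : (1 / α - 1) ^ p ≤ 2 * (1 - α) ^ p := by
  have hα0 : 0 < α := by linarith
  have hβ : 1 / α - 1 = (1 - α) / α := by field_simp
  calc (1 / α - 1) ^ p ≤ (2 * (1 - α)) ^ p := by
        rw [hβ]
        refine Real.rpow_le_rpow (div_nonneg (by linarith) hα0.le) ?_ hp0
        rw [div_le_iff₀ hα0]
        nlinarith
    _ = 2 ^ p * (1 - α) ^ p := Real.mul_rpow zero_le_two (by linarith)
    _ ≤ 2 * (1 - α) ^ p := by
        gcongr
        exact Real.rpow_le_self_of_one_le one_le_two hp1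

theorem uncentered_cube_solyanik_lower (n : ℕ) (hn : 1 ≤ n) :
    ∃ c : ℝ, 0 < c ∧ ∃ α₀ ∈ Set.Ioo (0 : ℝ) 1, ∀ α ∈ Set.Ioo α₀ 1,
      ENNReal.ofReal (c * (1 / α - 1) ^ ((n : ℝ)⁻¹)) ≤ CHLc n α - 1 := by
  refine ⟨(1 / 2) ^ n / (16 * n), by positivity, 1 / 2, ⟨by norm_num, by norm_num⟩,
    fun α ⟨hα, hα1⟩ => le_trans (ENNReal.ofReal_le_ofReal ?_)
      (ofReal_rpow_one_sub_le_CHLc_sub_one hn (by linarith) hα1)⟩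
  have hroot := one_div_sub_one_rpow_le hα.le hα1.le (p := (n : ℝ)⁻¹) (by positivity)
    (inv_le_one_of_one_le₀ (by exact_mod_cast hn))
  have hpow : (1 / 2 : ℝ) ^ n = (1 / 2) ^ (n - 1) / 2 := by
    rw [← pow_sub_one_mul (by omega)]; ring
  calc (1 / 2) ^ n / (16 * n) * (1 / α - 1) ^ ((n : ℝ)⁻¹)
      ≤ (1 / 2) ^ n / (16 * n) * (2 * (1 - α) ^ (n⁻¹ : ℝ)) := by gcongr
    _ = (1 - α) ^ (n⁻¹ : ℝ) / (16 * n) * (1 / 2) ^ (n - 1) := by rw [hpow]; field_simp
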